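/- arXiv:1102.4030 — 2 statements merged into one kernel-verified Lean document; each statement's English description precedes it below -/
import Mathlib

section
/- Let g ≥ 2 and let Σ_g be the genus-g surface group with its standard generating set X. Then F^{nil}_{Σ_g,X}(n) ≽ 2^{√n}: there exists a natural number M ≥ 1 such that 2^{⌊√n⌋} ≤ M · F^{nil}_{Σ_g,X}(M·n) for all n ≥ 1 (inequality in ℕ∞). -/
open scoped ENat
open scoped commutatorElement

/-- `γ` is a product of at most `n` elements of `X ∪ X⁻¹`. -/
def wordLenLE {G : Type*} [Group G] (X : Set G) (γ : G) (n : ℕ) : Prop :=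
  ∃ w : List G, w.length ≤ n ∧ (∀ x ∈ w, x ∈ X ∨ x⁻¹ ∈ X) ∧ w.prod = γ

/-- `D^P_Γ(γ)`: the minimal cardinality of a finite quotient of `Γ` with property `P`
detecting `γ`. -/
noncomputable def DQuot {G : Type*} [Group G] (P : GrpCat.{0} → Prop) (γ : G) : ℕ∞ :=
  sInf {c : ℕ∞ | ∃ (Q : GrpCat.{0}) (φ : G →* ↥Q), Finite ↥Q ∧ P Q ∧
    Function.Surjective φ ∧ φ γ ≠ 1 ∧ c = (Nat.card ↥Q : ℕ∞)}

/-- `F^P_{Γ,X}(n)`: residual finiteness growth. -/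
noncomputable def FGrowth {G : Type*} [Group G] (P : GrpCat.{0} → Prop) (X : Set G) (n : ℕ) : ℕ∞ :=
  ⨆ (γ : G) (_ : γ ≠ 1) (_ : wordLenLE X γ n), DQuot P γ

def allFiniteClass : GrpCat.{0} → Prop := fun _ => True

def solvableClass : GrpCat.{0} → Prop := fun Q => IsSolvable ↥Q

def nilpotentClass : GrpCat.{0} → Prop := fun Q => Group.IsNilpotent ↥Q

/-- `F^P_{Γ,X}` is at most polynomial in `log n`. -/
def PolyLogBounded {G : Type*} [Group G] (P : GrpCat.{0} → Prop) (X : Set G) : Prop :=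
  ∃ M r : ℕ, 1 ≤ M ∧ ∀ n : ℕ, 1 ≤ n →
    FGrowth P X n ≤ ((M * ⌈Real.log (M * n) ^ r⌉₊ : ℕ) : ℕ∞)

def VirtuallyNilpotent (G : Type*) [Group G] : Prop :=
  ∃ H : Subgroup G, H.FiniteIndex ∧ Group.IsNilpotent H

/-- The surface relator `[a₁,b₁][a₂,b₂]⋯[a_g,b_g]` in the free group on
`a_i = (i, false)`, `b_i = (i, true)`. -/
def surfaceRelator (g : ℕ) : FreeGroup (Fin g × Bool) :=
  (List.ofFn fun i : Fin g =>
    ⁅FreeGroup.of (i, false), FreeGroup.of (i, true)⁆).prod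

/-- The genus-`g` surface group `⟨a₁,b₁,…,a_g,b_g ∣ [a₁,b₁]⋯[a_g,b_g]⟩`. -/
abbrev SurfaceGroup (g : ℕ) : Type :=
  PresentedGroup ({surfaceRelator g} : Set (FreeGroup (Fin g × Bool)))

/-- The standard generating set of the surface group. -/
def surfaceGenSet (g : ℕ) : Set (SurfaceGroup g) :=
  Set.range (fun s : Fin g × Bool => PresentedGroup.of s)

/-!
Iterating `(u, v) ↦ ([u, v], [u⁻¹, v⁻¹])` from `(a₁, a₂)` gives, by `[γᵢ, γⱼ] ≤ γᵢ₊ⱼ`, an element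
`u_d` of word length at most `4 ^ d` in the `2 ^ d`-th term of the lower central series. It is
nontrivial: under the retraction of `Σ_g` onto the free group `F(x, y)` killing all generators
but `a₁ ↦ x`, `a₂ ↦ y`, it becomes the `d`-th iterate of the substitution
`x ↦ [x, y]`, `y ↦ [x⁻¹, y⁻¹]` at `x`, and this substitution is injective because it creates no
cancellation between the images of consecutive letters of a reduced word. In a finite nilpotent
group each nontrivial term of the lower central series has at most half the order of the
previous one, so a quotient not killing `u_d` has order at least `2 ^ 2 ^ d`. Choosing
`4 ^ d ≤ 4 n` with `√n ≤ 2 ^ d` concludes.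
-/

namespace FreeGroup

variable {α β : Type*}

theorem mk_flatMap_toWord [DecidableEq β] (f : FreeGroup α →* FreeGroup β)
    (L : List (α × Bool)) :
    mk (L.flatMap fun p => (f (mk [p])).toWord) = f (mk L) := by
  induction L with
  | nil => exact (_root_.map_one f).symm
  | cons p L ih =>
    rw [List.flatMap_cons, ← mul_mk, ih, mk_toWord, ← _root_.map_mul, mul_mk,
      List.singleton_append]

theorem isReduced_flatMap {w : α × Bool → List (β × Bool)} (hne : ∀ p, w p ≠ [])
    (hpair : ∀ p q, IsReduced [p, q] → IsReduced (w p ++ w q))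
    {L : List (α × Bool)} (hL : IsReduced L) : IsReduced (L.flatMap w) := by
  have hpair' p q (hpq : IsReduced [p, q]) := List.isChain_append.1 (hpair p q hpq)
  rw [IsReduced, List.flatMap_def, List.isChain_flatten (by simpa using fun p _ => hne p),
    List.isChain_map]
  refine ⟨fun l hl => ?_, hL.imp fun p q hpq => ?_⟩
  · obtain ⟨p, -, rfl⟩ := List.mem_map.1 hl
    exact (hpair' p p (isReduced_cons_cons.2 ⟨fun _ => rfl, .singleton⟩)).1
  · exact (hpair' p q (isReduced_cons_cons.2 ⟨hpq, .singleton⟩)).2.2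

theorem injective_of_isReduced_append [DecidableEq α] [DecidableEq β]
    (f : FreeGroup α →* FreeGroup β)
    (hne : ∀ p, f (mk [p]) ≠ 1)
    (hpair : ∀ p q, IsReduced [p, q] → IsReduced ((f (mk [p])).toWord ++ (f (mk [q])).toWord)) :
    Function.Injective f := by
  set w : α × Bool → List (β × Bool) := fun p => (f (mk [p])).toWord
  have hw : ∀ p, w p ≠ [] := fun p => toWord_eq_nil_iff.not.2 (hne p)
  refine (injective_iff_map_eq_one f).2 fun x hx => ?_
  have hred : (f x).toWord = x.toWord.flatMap w := by
    have := mk_flatMap_toWord f x.toWord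
    rw [mk_toWord] at this
    rw [← this, toWord_mk, (isReduced_flatMap hw hpair isReduced_toWord).reduce_eq]
  rw [hx, toWord_one] at hred
  rw [← toWord_eq_nil_iff]
  cases hL : x.toWord with
  | nil => rfl
  | cons p L => simp [hL, List.flatMap_cons, hw p] at hred

end FreeGroup

namespace Subgroup

variable {G : Type*} [Group G]

theorem commutator_commutator_le_of_rotate {H₁ H₂ H₃ N : Subgroup G} [N.Normal]
    (h₁ : ⁅⁅H₂, H₃⁆, H₁⁆ ≤ N) (h₂ : ⁅⁅H₃, H₁⁆, H₂⁆ ≤ N) : ⁅⁅H₁, H₂⁆, H₃⁆ ≤ N := by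
  simp_rw [← QuotientGroup.ker_mk' N, ← map_eq_bot_iff, map_commutator] at h₁ h₂ ⊢
  exact commutator_commutator_eq_bot_of_rotate h₁ h₂

theorem commutator_lowerCentralSeries_le (m n : ℕ) :
    ⁅lowerCentralSeries (⊤ : Subgroup G) m, lowerCentralSeries (⊤ : Subgroup G) n⁆ ≤
      lowerCentralSeries (⊤ : Subgroup G) (m + n + 1) := by
  induction n generalizing m with
  | zero => rfl
  | succ n ih =>
    rw [lowerCentralSeries_succ, commutator_comm]
    refine commutator_commutator_le_of_rotate ?_ ?_
    · rw [commutator_comm ⊤, ← lowerCentralSeries_succ]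
      convert ih (m + 1) using 2
      omega
    · rw [show m + (n + 1) + 1 = m + n + 1 + 1 by omega, lowerCentralSeries_succ]
      exact commutator_mono (ih m) le_rfl

theorem map_mem_lowerCentralSeries {K : Type*} [Group K] (f : G →* K) {n : ℕ} {x : G}
    (hx : x ∈ lowerCentralSeries (⊤ : Subgroup G) n) :
    f x ∈ lowerCentralSeries (⊤ : Subgroup K) n := by
  have := mem_map_of_mem f hx
  rw [map_lowerCentralSeries] at this
  exact lowerCentralSeries_mono n le_top this

theorem two_mul_card_le_of_lt [Finite G] {H K : Subgroup G} (h : H < K) :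
    2 * Nat.card H ≤ Nat.card K := by
  obtain ⟨t, ht⟩ := card_dvd_of_le h.le
  have ht0 : t ≠ 0 := by rintro rfl; rw [mul_zero] at ht; exact Nat.card_pos.ne' ht
  have ht1 : t ≠ 1 := by
    rintro rfl
    exact h.ne (eq_of_le_of_card_ge h.le (by simp [ht]))
  rw [ht, mul_comm]
  exact Nat.mul_le_mul_left _ (by omega)

theorem lowerCentralSeries_succ_lt [Group.IsNilpotent G] {i : ℕ}
    (hi : lowerCentralSeries (⊤ : Subgroup G) i ≠ ⊥) :
    lowerCentralSeries (⊤ : Subgroup G) (i + 1) < lowerCentralSeries ⊤ i := by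
  refine lt_of_le_of_ne (lowerCentralSeries_antitone _ i.le_succ) fun heq => hi ?_
  have hstable : ∀ j, lowerCentralSeries (⊤ : Subgroup G) (i + j) = lowerCentralSeries ⊤ i := by
    intro j
    induction j with
    | zero => rfl
    | succ j ih =>
      rw [← Nat.add_assoc, lowerCentralSeries_succ, ih, ← lowerCentralSeries_succ, heq]
  rw [eq_bot_iff, ← hstable (Group.nilpotencyClass G), ← lowerCentralSeries_nilpotencyClass]
  exact lowerCentralSeries_antitone _ (Nat.le_add_left _ _)

theorem two_pow_mul_card_lowerCentralSeries_le [Finite G] [Group.IsNilpotent G] {i : ℕ}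
    (hi : lowerCentralSeries (⊤ : Subgroup G) i ≠ ⊥) :
    2 ^ i * Nat.card (lowerCentralSeries (⊤ : Subgroup G) i) ≤ Nat.card G := by
  induction i with
  | zero => simp
  | succ i ih =>
    have hi' : lowerCentralSeries (⊤ : Subgroup G) i ≠ ⊥ :=
      ne_bot_of_le_ne_bot hi (lowerCentralSeries_antitone _ i.le_succ)
    calc 2 ^ (i + 1) * Nat.card (lowerCentralSeries (⊤ : Subgroup G) (i + 1))
        = 2 ^ i * (2 * Nat.card (lowerCentralSeries (⊤ : Subgroup G) (i + 1))) := by ring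
      _ ≤ 2 ^ i * Nat.card (lowerCentralSeries (⊤ : Subgroup G) i) :=
        Nat.mul_le_mul_left _ (two_mul_card_le_of_lt (lowerCentralSeries_succ_lt hi'))
      _ ≤ Nat.card G := ih hi'

theorem two_pow_succ_le_card_of_mem_lowerCentralSeries [Finite G] [Group.IsNilpotent G]
    {k : ℕ} {x : G} (hx : x ∈ lowerCentralSeries (⊤ : Subgroup G) k) (hx1 : x ≠ 1) :
    2 ^ (k + 1) ≤ Nat.card G := by
  have hk : lowerCentralSeries (⊤ : Subgroup G) k ≠ ⊥ :=
    fun h => hx1 (mem_bot.1 (h ▸ hx))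
  calc 2 ^ (k + 1) = 2 ^ k * 2 := pow_succ 2 k
    _ ≤ 2 ^ k * Nat.card (lowerCentralSeries (⊤ : Subgroup G) k) :=
      Nat.mul_le_mul_left _ ((one_lt_card_iff_ne_bot _).2 hk)
    _ ≤ Nat.card G := two_pow_mul_card_lowerCentralSeries_le hk

end Subgroup

section WordLength

variable {G : Type*} [Group G] {X : Set G}

theorem wordLenLE_of_mem {x : G} (hx : x ∈ X) : wordLenLE X x 1 :=
  ⟨[x], le_rfl, by simp [hx], List.prod_singleton⟩

theorem wordLenLE.mono {x : G} {n m : ℕ} (h : wordLenLE X x n) (hnm : n ≤ m) :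
    wordLenLE X x m :=
  let ⟨w, hlen, hw, hprod⟩ := h
  ⟨w, hlen.trans hnm, hw, hprod⟩

theorem wordLenLE.inv {x : G} {n : ℕ} (h : wordLenLE X x n) : wordLenLE X x⁻¹ n := by
  obtain ⟨w, hlen, hw, rfl⟩ := h
  refine ⟨(w.map (·⁻¹)).reverse, by simpa using hlen, ?_, List.prod_inv_reverse w ▸ rfl⟩
  simp only [List.mem_reverse, List.mem_map]
  rintro _ ⟨y, hy, rfl⟩
  simpa [or_comm] using hw y hy

theorem wordLenLE.mul {x y : G} {n m : ℕ} (hx : wordLenLE X x n) (hy : wordLenLE X y m) :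
    wordLenLE X (x * y) (n + m) := by
  obtain ⟨w, hlen, hw, rfl⟩ := hx
  obtain ⟨w', hlen', hw', rfl⟩ := hy
  refine ⟨w ++ w', by simpa using Nat.add_le_add hlen hlen', ?_, List.prod_append⟩
  simpa only [List.mem_append, or_imp, forall_and] using ⟨hw, hw'⟩

theorem wordLenLE.commutatorElement {x y : G} {n m : ℕ} (hx : wordLenLE X x n)
    (hy : wordLenLE X y m) : wordLenLE X ⁅x, y⁆ (2 * (n + m)) := by
  rw [commutatorElement_def]
  exact (((hx.mul hy).mul hx.inv).mul hy.inv).mono (by omega)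

end WordLength

section CommutatorTree

variable {G : Type*} [Group G]

def commutatorStep (p : G × G) : G × G :=
  (⁅p.1, p.2⁆, ⁅p.1⁻¹, p.2⁻¹⁆)

theorem map_commutatorStep_iterate {H : Type*} [Group H] (f : G →* H) (p : G × G) (d : ℕ) :
    Prod.map f f (commutatorStep^[d] p) = commutatorStep^[d] (Prod.map f f p) := by
  induction d with
  | zero => rfl
  | succ d ih =>
    rw [Function.iterate_succ_apply', Function.iterate_succ_apply', ← ih]
    simp only [commutatorStep, Prod.map, map_commutatorElement, _root_.map_inv]

theorem commutatorStep_iterate_mem_lowerCentralSeries (p : G × G) (d : ℕ) :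
    (commutatorStep^[d] p).1 ∈ Subgroup.lowerCentralSeries (⊤ : Subgroup G) (2 ^ d - 1) ∧
      (commutatorStep^[d] p).2 ∈ Subgroup.lowerCentralSeries (⊤ : Subgroup G) (2 ^ d - 1) := by
  induction d with
  | zero => exact ⟨Subgroup.mem_top _, Subgroup.mem_top _⟩
  | succ d ih =>
    have hindex : 2 ^ d - 1 + (2 ^ d - 1) + 1 = 2 ^ (d + 1) - 1 := by
      have := Nat.one_le_two_pow (n := d)
      rw [pow_succ]
      omega
    rw [Function.iterate_succ_apply', ← hindex]
    exact ⟨Subgroup.commutator_lowerCentralSeries_le _ _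
        (Subgroup.commutator_mem_commutator ih.1 ih.2),
      Subgroup.commutator_lowerCentralSeries_le _ _
        (Subgroup.commutator_mem_commutator (inv_mem ih.1) (inv_mem ih.2))⟩

theorem wordLenLE_commutatorStep_iterate {X : Set G} {p : G × G} {ℓ : ℕ}
    (h₁ : wordLenLE X p.1 ℓ) (h₂ : wordLenLE X p.2 ℓ) (d : ℕ) :
    wordLenLE X (commutatorStep^[d] p).1 (4 ^ d * ℓ) ∧
      wordLenLE X (commutatorStep^[d] p).2 (4 ^ d * ℓ) := by
  induction d with
  | zero => simpa using ⟨h₁, h₂⟩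
  | succ d ih =>
    have hlen : 2 * (4 ^ d * ℓ + 4 ^ d * ℓ) = 4 ^ (d + 1) * ℓ := by ring
    rw [Function.iterate_succ_apply', ← hlen]
    exact ⟨ih.1.commutatorElement ih.2, ih.1.inv.commutatorElement ih.2.inv⟩

end CommutatorTree

theorem two_pow_succ_le_DQuot_nilpotentClass {G : Type*} [Group G] {γ : G} {k : ℕ}
    (hγ : γ ∈ Subgroup.lowerCentralSeries (⊤ : Subgroup G) k) :
    ((2 ^ (k + 1) : ℕ) : ℕ∞) ≤ DQuot nilpotentClass γ := by
  refine le_sInf ?_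
  rintro _ ⟨Q, φ, _, hnil, -, hφγ, rfl⟩
  have : Group.IsNilpotent Q := hnil
  exact_mod_cast Subgroup.two_pow_succ_le_card_of_mem_lowerCentralSeries
    (Subgroup.map_mem_lowerCentralSeries φ hγ) hφγ

theorem DQuot_le_FGrowth {G : Type*} [Group G] {P : GrpCat.{0} → Prop} {X : Set G} {γ : G}
    {n : ℕ} (hγ : γ ≠ 1) (hlen : wordLenLE X γ n) : DQuot P γ ≤ FGrowth P X n :=
  le_iSup₂_of_le (f := fun γ (_ : γ ≠ 1) => ⨆ _ : wordLenLE X γ n, DQuot P γ) γ hγ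
    (le_iSup_of_le hlen le_rfl)

theorem FGrowth_mono {G : Type*} [Group G] (P : GrpCat.{0} → Prop) (X : Set G) :
    Monotone (FGrowth P X) := fun _ _ hnm =>
  iSup₂_mono fun _ _ => iSup_le fun hlen => le_iSup_of_le (hlen.mono hnm) le_rfl

open FreeGroup in
def commutatorSubst : FreeGroup Bool →* FreeGroup Bool :=
  FreeGroup.lift fun b => if b then ⁅(of false)⁻¹, (of true)⁻¹⁆ else ⁅of false, of true⁆

open FreeGroup in
theorem commutatorSubst_injective : Function.Injective commutatorSubst := by
  refine injective_of_isReduced_append _ (by decide +kernel) ?_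
  unfold FreeGroup.IsReduced
  decide +kernel

theorem fst_commutatorStep_iterate_ne_one (d : ℕ) :
    (commutatorStep^[d] (FreeGroup.of false, FreeGroup.of true)).1 ≠ 1 := by
  induction d with
  | zero => exact FreeGroup.of_ne_one false
  | succ d ih =>
    have hstep : commutatorStep (FreeGroup.of false, FreeGroup.of true) =
        Prod.map commutatorSubst commutatorSubst (FreeGroup.of false, FreeGroup.of true) := rfl
    rw [Function.iterate_succ_apply, hstep, ← map_commutatorStep_iterate]
    exact (map_ne_one_iff _ commutatorSubst_injective).2 ih

theorem surfaceRelator_lift_eq_one {H : Type*} [Group H] {g : ℕ} {f : Fin g × Bool → H}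
    (hf : ∀ i, f (i, true) = 1) : FreeGroup.lift f (surfaceRelator g) = 1 := by
  rw [surfaceRelator, map_list_prod, List.map_ofFn]
  refine List.prod_eq_one fun x hx => ?_
  obtain ⟨i, rfl⟩ := List.mem_ofFn.1 hx
  simp [map_commutatorElement, hf]

def surfaceGroupToFreeGroup (g : ℕ) : SurfaceGroup g →* FreeGroup Bool :=
  PresentedGroup.toGroup (f := fun s : Fin g × Bool =>
      if s.2 then 1 else if s.1.val = 0 then FreeGroup.of false
      else if s.1.val = 1 then FreeGroup.of true else 1)
    (by rintro _ rfl; exact surfaceRelator_lift_eq_one fun _ => rfl)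

theorem exists_mem_lowerCentralSeries_wordLenLE {g : ℕ} (hg : 2 ≤ g) (d : ℕ) :
    ∃ γ : SurfaceGroup g, γ ≠ 1 ∧
      γ ∈ Subgroup.lowerCentralSeries (⊤ : Subgroup (SurfaceGroup g)) (2 ^ d - 1) ∧
      wordLenLE (surfaceGenSet g) γ (4 ^ d) := by
  set p : SurfaceGroup g × SurfaceGroup g :=
    (PresentedGroup.of (⟨0, by omega⟩, false), PresentedGroup.of (⟨1, by omega⟩, false))
  have hp : Prod.map (surfaceGroupToFreeGroup g) (surfaceGroupToFreeGroup g) p =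
      (FreeGroup.of false, FreeGroup.of true) := by
    simp [p, surfaceGroupToFreeGroup]
  have hlen := wordLenLE_commutatorStep_iterate (X := surfaceGenSet g) (p := p)
    (wordLenLE_of_mem (Set.mem_range_self _)) (wordLenLE_of_mem (Set.mem_range_self _)) d
  refine ⟨(commutatorStep^[d] p).1, fun h1 => fst_commutatorStep_iterate_ne_one d ?_,
    (commutatorStep_iterate_mem_lowerCentralSeries p d).1, by simpa using hlen.1⟩
  rw [← hp, ← map_commutatorStep_iterate]
  simp [h1]

theorem exists_sqrt_le_two_pow_and_four_pow_le {n : ℕ} (hn : 0 < n) :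
    ∃ d, Nat.sqrt n ≤ 2 ^ d ∧ 4 ^ d ≤ 4 * n := by
  set c := Nat.sqrt n
  have hc : c ≠ 0 := (Nat.sqrt_pos.2 hn).ne'
  refine ⟨Nat.log 2 c + 1, (Nat.lt_pow_succ_log_self one_lt_two c).le, ?_⟩
  have hlog : 2 ^ Nat.log 2 c ≤ c := Nat.pow_log_le_self 2 hc
  calc 4 ^ (Nat.log 2 c + 1) = 4 * (2 ^ Nat.log 2 c) ^ 2 := by
        rw [← pow_mul, mul_comm _ 2, pow_mul, pow_succ, mul_comm]; norm_num
    _ ≤ 4 * c ^ 2 := by gcongr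
    _ ≤ 4 * n := by gcongr; exact Nat.sqrt_le' n

theorem stmt2 (g : ℕ) (hg : 2 ≤ g) :
    ∃ M : ℕ, 1 ≤ M ∧ ∀ n : ℕ, 1 ≤ n →
      ((2 ^ Nat.sqrt n : ℕ) : ℕ∞) ≤
        (M : ℕ∞) * FGrowth nilpotentClass (surfaceGenSet g) (M * n) := by
  refine ⟨4, by norm_num, fun n hn => ?_⟩
  obtain ⟨d, hsqrt, hlen⟩ := exists_sqrt_le_two_pow_and_four_pow_le hn
  obtain ⟨γ, hγ, hlcs, hγlen⟩ := exists_mem_lowerCentralSeries_wordLenLE hg d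
  have hindex : 2 ^ d - 1 + 1 = 2 ^ d := Nat.sub_add_cancel Nat.one_le_two_pow
  calc ((2 ^ Nat.sqrt n : ℕ) : ℕ∞) ≤ ((2 ^ (2 ^ d - 1 + 1) : ℕ) : ℕ∞) := by
        rw [hindex]; exact_mod_cast Nat.pow_le_pow_right two_pos hsqrt
    _ ≤ DQuot nilpotentClass γ := two_pow_succ_le_DQuot_nilpotentClass hlcs
    _ ≤ FGrowth nilpotentClass (surfaceGenSet g) (4 ^ d) := DQuot_le_FGrowth hγ hγlen
    _ ≤ FGrowth nilpotentClass (surfaceGenSet g) (4 * n) := FGrowth_mono _ _ hlen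
    _ ≤ ((4 : ℕ) : ℕ∞) * FGrowth nilpotentClass (surfaceGenSet g) (4 * n) :=
        le_mul_of_one_le_left' (by norm_num)
end

section
/- Let Δ = ker(φ: PSL₂(ℤ[i]) → SL₂(ℤ/2ℤ)) be the kernel of the reduction homomorphism induced by ℤ[i] → ℤ[i]/(1−i)ℤ[i] ≅ ℤ/2ℤ. Then for every finite generating set X of Δ there exists a natural number M ≥ 1 such that F^{nil}_{Δ,X}(n) ≤ M·2^{M·n} for all n ≥ 1; that is, the nilpotent residual finiteness growth of Δ satisfies F^{nil}_{Δ,X}(n) ≼ 2^n. -/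
open scoped ENat

open Matrix

abbrev SL2 (R : Type*) [CommRing R] := Matrix.SpecialLinearGroup (Fin 2) R

instance : Fact (Even 2) := ⟨⟨1, rfl⟩⟩

/-- The subgroup `{±1}` of `SL₂(R)`. -/
def pmOne (R : Type*) [CommRing R] : Subgroup (SL2 R) := Subgroup.zpowers (-1)

lemma neg_one_comm {R : Type*} [CommRing R] (g : SL2 R) : g * (-1) = (-1) * g := by
  apply Subtype.ext; simp

instance pmOne_normal (R : Type*) [CommRing R] : (pmOne R).Normal := by
  constructor
  intro x hx g
  obtain ⟨k, rfl⟩ := Subgroup.mem_zpowers_iff.mp hx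
  have hc : Commute g (-1 : SL2 R) := neg_one_comm g
  have hck : g * (-1 : SL2 R) ^ k = (-1 : SL2 R) ^ k * g := (hc.zpow_right k).eq
  rw [hck, mul_inv_cancel_right]
  exact hx

/-- `PSL₂(R) = SL₂(R)/{±1}`. -/
abbrev PSL2 (R : Type*) [CommRing R] := SL2 R ⧸ pmOne R

/-- The ring homomorphism `ℤ[i] → ℤ[i]/(1-i)ℤ[i] ≅ ℤ/2ℤ`, `a + bi ↦ a + b mod 2`. -/
def gaussToZMod2 : GaussianInt →+* ZMod 2 where
  toFun z := (z.re : ZMod 2) + (z.im : ZMod 2)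
  map_one' := by simp
  map_zero' := by simp
  map_mul' z w := by
    have h : ((z * w).re + (z * w).im : ℤ) =
        (z.re + z.im) * (w.re + w.im) - 2 * (z.im * w.im) := by
      simp [Zsqrtd.re_mul, Zsqrtd.im_mul]; ring
    have h2 : (((z * w).re + (z * w).im : ℤ) : ZMod 2) =
        (((z.re + z.im) * (w.re + w.im) - 2 * (z.im * w.im) : ℤ) : ZMod 2) := by rw [h]
    push_cast at h2
    rw [show ((2 : ZMod 2) = 0) by decide] at h2
    push_cast
    linear_combination h2
  map_add' z w := by
    simp [Zsqrtd.re_add, Zsqrtd.im_add]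
    ring

/-- Entrywise reduction `SL₂(ℤ[i]) → SL₂(ℤ/2ℤ)`. -/
def redSL : SL2 GaussianInt →* SL2 (ZMod 2) :=
  Matrix.SpecialLinearGroup.map gaussToZMod2

lemma redSL_neg_one : redSL (-1) = 1 := by
  apply Subtype.ext
  ext i j
  fin_cases i <;> fin_cases j <;>
    simp [redSL, Matrix.SpecialLinearGroup.map, gaussToZMod2] <;> decide

/-- The homomorphism `φ : PSL₂(ℤ[i]) → SL₂(ℤ/2ℤ)` induced by
`ℤ[i] → ℤ[i]/(1-i)ℤ[i] ≅ ℤ/2ℤ`. -/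
def redPSL : PSL2 GaussianInt →* SL2 (ZMod 2) :=
  QuotientGroup.lift (pmOne GaussianInt) redSL (by
    intro x hx
    obtain ⟨k, rfl⟩ := Subgroup.mem_zpowers_iff.mp hx
    rw [MonoidHom.mem_ker, map_zpow, redSL_neg_one, _root_.one_zpow])

/-!
Lift the generators of `Δ` to `SL₂(ℤ[i])`: a word of length `n` then lifts to a matrix whose
entries have `ℓ¹`-size at most `2 Bⁿ`. Reducing modulo `2ᵏ` with `2ᵏ > 2 Bⁿ + 2`, so `k ≍ n`,
such a lift becomes `±1` only if it already was `±1`, so a nontrivial `γ` survives in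
`PSL₂(ℤ[i]/2ᵏ)`, a group of order at most `2^(8k)`. The image of `Δ` there is a `2`-group, hence
nilpotent: squaring `1 + N` gives `1 + 2N + N²`, so a matrix `≡ 1 mod (1 + i)` satisfies
`A^(2ᵏ) ≡ 1 mod 2ᵏ`.
-/

namespace GaussianInt

def l1Norm (z : GaussianInt) : ℕ := z.re.natAbs + z.im.natAbs

@[simp] lemma l1Norm_zero : l1Norm 0 = 0 := rfl

@[simp] lemma l1Norm_one : l1Norm 1 = 1 := rfl

@[simp] lemma l1Norm_neg (z : GaussianInt) : l1Norm (-z) = l1Norm z := by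
  simp [l1Norm]

lemma l1Norm_add_le (z w : GaussianInt) : l1Norm (z + w) ≤ l1Norm z + l1Norm w := by
  simp only [l1Norm, Zsqrtd.re_add, Zsqrtd.im_add]
  linarith [Int.natAbs_add_le z.re w.re, Int.natAbs_add_le z.im w.im]

lemma l1Norm_sub_le (z w : GaussianInt) : l1Norm (z - w) ≤ l1Norm z + l1Norm w := by
  simpa [sub_eq_add_neg] using l1Norm_add_le z (-w)

lemma l1Norm_mul_le (z w : GaussianInt) : l1Norm (z * w) ≤ l1Norm z * l1Norm w := by
  simp only [l1Norm, Zsqrtd.re_mul, Zsqrtd.im_mul, Int.reduceNeg, neg_mul, one_mul]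
  have := Int.natAbs_add_le (z.re * w.re) (-(z.im * w.im))
  have := Int.natAbs_add_le (z.re * w.im) (z.im * w.re)
  simp only [Int.natAbs_neg, Int.natAbs_mul] at *
  nlinarith

lemma le_l1Norm_of_natCast_dvd {m : ℕ} {z : GaussianInt} (hz : z ≠ 0)
    (hm : (m : GaussianInt) ∣ z) : m ≤ l1Norm z := by
  obtain ⟨hre, him⟩ := (Zsqrtd.intCast_dvd (m : ℤ) z).mp (by exact_mod_cast hm)
  have hre' := Int.natAbs_dvd_natAbs.mpr hre
  have him' := Int.natAbs_dvd_natAbs.mpr him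
  simp only [Int.natAbs_natCast] at hre' him'
  rcases Zsqrtd.ext_iff.not.mp hz |> not_and_or.mp with h | h
  · have := Nat.le_of_dvd (Int.natAbs_pos.mpr h) hre'
    unfold l1Norm; omega
  · have := Nat.le_of_dvd (Int.natAbs_pos.mpr h) him'
    unfold l1Norm; omega

variable {l m n : Type*} [Fintype l] [Fintype m] [Fintype n]

def matrixL1Norm (A : Matrix m n GaussianInt) : ℕ := ∑ i, ∑ j, l1Norm (A i j)

lemma l1Norm_le_matrixL1Norm (A : Matrix m n GaussianInt) (i : m) (j : n) :
    l1Norm (A i j) ≤ matrixL1Norm A :=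
  (Finset.single_le_sum (f := fun j => l1Norm (A i j)) (by simp) (Finset.mem_univ j)).trans
    (Finset.single_le_sum (f := fun i => ∑ j, l1Norm (A i j)) (by simp) (Finset.mem_univ i))

@[simp] lemma matrixL1Norm_neg (A : Matrix m n GaussianInt) :
    matrixL1Norm (-A) = matrixL1Norm A := by
  simp [matrixL1Norm]

lemma matrixL1Norm_sub_le (A B : Matrix m n GaussianInt) :
    matrixL1Norm (A - B) ≤ matrixL1Norm A + matrixL1Norm B := by
  simp only [matrixL1Norm, ← Finset.sum_add_distrib]
  gcongr with i _ j _
  exact l1Norm_sub_le _ _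

@[simp] lemma matrixL1Norm_one [DecidableEq n] :
    matrixL1Norm (1 : Matrix n n GaussianInt) = Fintype.card n := by
  simp [matrixL1Norm, Matrix.one_apply, apply_ite l1Norm]

lemma matrixL1Norm_mul_le (A : Matrix l m GaussianInt) (B : Matrix m n GaussianInt) :
    matrixL1Norm (A * B) ≤ matrixL1Norm A * matrixL1Norm B :=
  calc matrixL1Norm (A * B)
      ≤ ∑ i, ∑ j, ∑ k, l1Norm (A i k) * l1Norm (B k j) := by
        unfold matrixL1Norm
        gcongr with i _ j _
        exact (Finset.le_sum_of_subadditive l1Norm l1Norm_zero.le l1Norm_add_le _ _).trans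
          (Finset.sum_le_sum fun k _ => l1Norm_mul_le _ _)
    _ ≤ ∑ i, ∑ k, ∑ k', ∑ j, l1Norm (A i k) * l1Norm (B k' j) := by
        gcongr with i _
        rw [Finset.sum_comm]
        gcongr with k _
        exact Finset.single_le_sum (f := fun k' => ∑ j, l1Norm (A i k) * l1Norm (B k' j))
          (by simp) (Finset.mem_univ k)
    _ = matrixL1Norm A * matrixL1Norm B := by
        simp_rw [matrixL1Norm, Finset.sum_mul, Finset.mul_sum]

lemma eq_zero_of_natCast_dvd_of_matrixL1Norm_lt {N : ℕ} {A : Matrix m n GaussianInt}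
    (hdvd : ∀ i j, (N : GaussianInt) ∣ A i j) (hA : matrixL1Norm A < N) : A = 0 := by
  ext i j : 1
  by_contra h
  exact absurd ((le_l1Norm_of_natCast_dvd h (hdvd i j)).trans (l1Norm_le_matrixL1Norm A i j))
    (not_le.mpr hA)

end GaussianInt

open GaussianInt

section PSL2

variable {R S : Type*} [CommRing R] [CommRing S]

lemma mem_pmOne_iff {g : SL2 R} : g ∈ pmOne R ↔ g = 1 ∨ g = -1 := by
  refine ⟨fun hg => ?_, by rintro (rfl | rfl) <;> simp [pmOne, Subgroup.mem_zpowers]⟩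
  obtain ⟨m, rfl⟩ := Subgroup.mem_zpowers_iff.mp hg
  rcases m.even_or_odd with hm | hm
  · exact .inl hm.neg_one_zpow
  · exact .inr hm.neg_one_zpow

lemma PSL2.mk_eq_one_iff {g : SL2 R} : (g : PSL2 R) = 1 ↔ g = 1 ∨ g = -1 :=
  (QuotientGroup.eq_one_iff g).trans mem_pmOne_iff

lemma SL2.map_neg_one (f : R →+* S) : Matrix.SpecialLinearGroup.map f (-1 : SL2 R) = -1 :=
  Subtype.ext <| by simp [Matrix.map_neg, Matrix.map_one]

def PSL2.map (f : R →+* S) : PSL2 R →* PSL2 S :=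
  QuotientGroup.map _ _ (Matrix.SpecialLinearGroup.map f) <|
    (Subgroup.zpowers_le (H := (pmOne S).comap _)).mpr (by
      simp [SL2.map_neg_one, pmOne, Subgroup.mem_zpowers])

@[simp] lemma PSL2.map_mk (f : R →+* S) (g : SL2 R) :
    PSL2.map f g = (Matrix.SpecialLinearGroup.map f g : PSL2 S) := rfl

lemma PSL2.card_le [Finite R] : Nat.card (PSL2 R) ≤ Nat.card R ^ 4 :=
  calc Nat.card (PSL2 R)
      ≤ Nat.card (SL2 R) := Nat.card_le_card_of_surjective _ (QuotientGroup.mk_surjective)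
    _ ≤ Nat.card (Fin 2 → Fin 2 → R) := Nat.card_le_card_of_injective _ Subtype.val_injective
    _ = Nat.card R ^ 4 := by simp [Nat.card_fun, ← pow_mul]

end PSL2

lemma SL2.map_mk_eq_map_mk_iff {R : Type*} [CommRing R] {a : R} {g h : SL2 R} :
    Matrix.SpecialLinearGroup.map (Ideal.Quotient.mk (Ideal.span {a})) g =
        Matrix.SpecialLinearGroup.map (Ideal.Quotient.mk (Ideal.span {a})) h ↔
      ∀ i j, a ∣ g i j - h i j := by
  simp only [Matrix.SpecialLinearGroup.ext_iff, Matrix.SpecialLinearGroup.map_apply_coe,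
    RingHom.mapMatrix_apply, Matrix.map_apply, Ideal.Quotient.eq, Ideal.mem_span_singleton]

abbrev GaussMod (N : ℕ) := GaussianInt ⧸ Ideal.span {(N : GaussianInt)}

namespace GaussMod

variable (N : ℕ) [NeZero N]

lemma surjective_mk_zmod :
    Function.Surjective fun p : ZMod N × ZMod N =>
      (Ideal.Quotient.mk _ ⟨p.1.val, p.2.val⟩ : GaussMod N) := by
  intro q
  obtain ⟨z, rfl⟩ := Ideal.Quotient.mk_surjective q
  refine ⟨(z.re, z.im), Ideal.Quotient.eq.mpr (Ideal.mem_span_singleton.mpr ?_)⟩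
  rw [← Int.cast_natCast, Zsqrtd.intCast_dvd]
  simpa [-ZMod.natCast_val, ZMod.val_intCast] using
    ⟨(Int.mod_modEq z.re N).symm.dvd, (Int.mod_modEq z.im N).symm.dvd⟩

instance : Finite (GaussMod N) := Finite.of_surjective _ (surjective_mk_zmod N)

lemma card_le : Nat.card (GaussMod N) ≤ N ^ 2 :=
  (Nat.card_le_card_of_surjective _ (surjective_mk_zmod N)).trans_eq (by simp [sq])

end GaussMod

lemma SL2.eq_of_map_mk_eq_of_matrixL1Norm_lt {N : ℕ} {g h : SL2 GaussianInt}
    (hgh : Matrix.SpecialLinearGroup.map (Ideal.Quotient.mk (Ideal.span {(N : GaussianInt)})) g =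
      Matrix.SpecialLinearGroup.map (Ideal.Quotient.mk _) h)
    (hN : matrixL1Norm g.1 + matrixL1Norm h.1 < N) : g = h := by
  have hdvd : ∀ i j, (N : GaussianInt) ∣ (g.1 - h.1) i j := SL2.map_mk_eq_map_mk_iff.mp hgh
  exact Subtype.ext <| sub_eq_zero.mp <|
    eq_zero_of_natCast_dvd_of_matrixL1Norm_lt hdvd ((matrixL1Norm_sub_le _ _).trans_lt hN)

lemma PSL2.map_mk_ne_one {N : ℕ} {g : SL2 GaussianInt} (hg : (g : PSL2 GaussianInt) ≠ 1)
    (hN : matrixL1Norm g.1 + 2 < N) :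
    PSL2.map (Ideal.Quotient.mk (Ideal.span {(N : GaussianInt)})) (g : PSL2 GaussianInt) ≠ 1 := by
  intro h
  rw [PSL2.map_mk, PSL2.mk_eq_one_iff] at h
  rw [Ne, PSL2.mk_eq_one_iff] at hg
  refine hg (h.imp (fun h1 => SL2.eq_of_map_mk_eq_of_matrixL1Norm_lt (h1.trans (map_one _).symm) ?_)
    (fun h1 => SL2.eq_of_map_mk_eq_of_matrixL1Norm_lt (h1.trans (SL2.map_neg_one _).symm) ?_))
  · simpa using hN
  · simpa using hN

lemma Matrix.dvd_mul_self_sub_one {R n : Type*} [CommRing R] [Fintype n] [DecidableEq n]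
    {A : Matrix n n R} {c e : R} (hcc : e ∣ c * c) (h2c : e ∣ 2 * c)
    (hA : ∀ i j, c ∣ (A - 1) i j) (i j : n) : e ∣ (A * A - 1) i j := by
  have hsq : A * A - 1 = (A - 1) * (A - 1) + 2 • (A - 1) := by noncomm_ring
  rw [hsq, Matrix.add_apply, Matrix.mul_apply, Matrix.smul_apply, nsmul_eq_mul, Nat.cast_ofNat]
  exact dvd_add (Finset.dvd_sum fun l _ => hcc.trans (mul_dvd_mul (hA i l) (hA l j)))
    (h2c.trans (mul_dvd_mul_left 2 (hA i j)))

lemma GaussianInt.one_add_sqrtd_dvd_of_gaussToZMod2_eq_zero {z : GaussianInt}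
    (hz : gaussToZMod2 z = 0) : 1 + Zsqrtd.sqrtd ∣ z := by
  have h2 : (2 : ℤ) ∣ z.re + z.im := by
    exact_mod_cast (ZMod.intCast_zmod_eq_zero_iff_dvd _ 2).mp (by push_cast; exact hz)
  obtain ⟨a, ha⟩ := h2
  -- `(1 + i) (x + y i) = (x - y) + (x + y) i`
  exact ⟨⟨a, a - z.re⟩, Zsqrtd.ext (by simp) (by simp; omega)⟩

lemma SL2.one_add_sqrtd_dvd_sub_one {g : SL2 GaussianInt} (hg : redSL g = 1) (i j : Fin 2) :
    1 + Zsqrtd.sqrtd ∣ (g.1 - 1) i j := by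
  refine GaussianInt.one_add_sqrtd_dvd_of_gaussToZMod2_eq_zero ?_
  have := congrArg (fun h : SL2 (ZMod 2) => (h.1 - 1) i j) hg
  simpa [redSL, Matrix.one_apply, apply_ite gaussToZMod2] using this

lemma GaussianInt.two_pow_dvd_pow_two_pow_sub_one {n : Type*} [Fintype n] [DecidableEq n]
    {A : Matrix n n GaussianInt} (hA : ∀ i j, 1 + Zsqrtd.sqrtd ∣ (A - 1) i j) {k : ℕ} (hk : 1 ≤ k)
    (i j : n) : 2 ^ k ∣ (A ^ 2 ^ k - 1 : Matrix n n GaussianInt) i j := by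
  induction k, hk using Nat.le_induction generalizing i j with
  | base =>
    rw [pow_one, pow_one, sq]
    exact Matrix.dvd_mul_self_sub_one ⟨Zsqrtd.sqrtd, by ext <;> simp⟩ (dvd_mul_right _ _) hA i j
  | succ k hk ih =>
    rw [pow_succ (2 : ℕ), pow_mul, sq, pow_succ]
    exact Matrix.dvd_mul_self_sub_one (mul_dvd_mul_left _ (dvd_pow_self 2 (by omega)))
      ⟨1, by ring⟩ ih i j

lemma PSL2.map_pow_two_pow_eq_one {γ : PSL2 GaussianInt} (hγ : redPSL γ = 1) {k : ℕ}
    (hk : 1 ≤ k) :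
    PSL2.map (Ideal.Quotient.mk (Ideal.span {((2 ^ k : ℕ) : GaussianInt)})) γ ^ 2 ^ k = 1 := by
  obtain ⟨g, rfl⟩ := QuotientGroup.mk_surjective γ
  have hg : redSL g = 1 := hγ
  rw [← map_pow, ← QuotientGroup.mk_pow, PSL2.map_mk, PSL2.mk_eq_one_iff, ← map_one
    (Matrix.SpecialLinearGroup.map (Ideal.Quotient.mk (Ideal.span {((2 ^ k : ℕ) : GaussianInt)})))]
  refine .inl (SL2.map_mk_eq_map_mk_iff.mpr fun i j => ?_)
  simpa using GaussianInt.two_pow_dvd_pow_two_pow_sub_one (SL2.one_add_sqrtd_dvd_sub_one hg) hk i j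

def kerRedPSLToMod (k : ℕ) : redPSL.ker →* PSL2 (GaussMod (2 ^ k)) :=
  (PSL2.map (Ideal.Quotient.mk _)).comp redPSL.ker.subtype

lemma isPGroup_range_kerRedPSLToMod {k : ℕ} (hk : 1 ≤ k) :
    IsPGroup 2 (kerRedPSLToMod k).range := by
  rintro ⟨_, γ, rfl⟩
  exact ⟨k, Subtype.ext (PSL2.map_pow_two_pow_eq_one γ.2 hk)⟩

lemma DQuot_le_card_of_map_ne_one {G H : Type} [Group G] [Group H] [Finite H]
    {P : GrpCat.{0} → Prop} (φ : G →* H) (hP : P (GrpCat.of φ.range)) {γ : G} (hγ : φ γ ≠ 1) :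
    DQuot P γ ≤ Nat.card H :=
  calc DQuot P γ ≤ Nat.card φ.range :=
        sInf_le ⟨GrpCat.of φ.range, φ.rangeRestrict, inferInstance, hP,
          φ.rangeRestrict_surjective, fun h => hγ (congrArg Subtype.val h), rfl⟩
    _ ≤ Nat.card H := by exact_mod_cast φ.range.card_le_card_group

lemma exists_lift_matrixL1Norm_le {S : Set (PSL2 GaussianInt)} (hS : S.Finite) :
    ∃ B : ℕ, 1 ≤ B ∧ ∀ γ ∈ S, ∃ g : SL2 GaussianInt, (g : PSL2 GaussianInt) = γ ∧
      matrixL1Norm g.1 ≤ B := by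
  obtain ⟨B, hB⟩ := (hS.image fun γ => matrixL1Norm γ.out.1).bddAbove
  exact ⟨max B 1, le_max_right _ _, fun γ hγ =>
    ⟨γ.out, QuotientGroup.out_eq' γ, (hB ⟨γ, hγ, rfl⟩).trans (le_max_left _ _)⟩⟩

lemma exists_lift_prod_matrixL1Norm_le {S : Set (PSL2 GaussianInt)} {B : ℕ}
    (hB : ∀ γ ∈ S, ∃ g : SL2 GaussianInt, (g : PSL2 GaussianInt) = γ ∧ matrixL1Norm g.1 ≤ B)
    (w : List (PSL2 GaussianInt)) (hw : ∀ γ ∈ w, γ ∈ S) :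
    ∃ g : SL2 GaussianInt, (g : PSL2 GaussianInt) = w.prod ∧
      matrixL1Norm g.1 ≤ 2 * B ^ w.length := by
  induction w with
  | nil => exact ⟨1, rfl, by simp⟩
  | cons γ w ih =>
    obtain ⟨h, hhγ, hh⟩ := hB γ (hw γ List.mem_cons_self)
    obtain ⟨g, hgw, hg⟩ := ih fun δ hδ => hw δ (List.mem_cons_of_mem _ hδ)
    refine ⟨h * g, by rw [List.prod_cons, ← hgw, ← hhγ]; rfl, ?_⟩
    calc matrixL1Norm (h * g).1 ≤ matrixL1Norm h.1 * matrixL1Norm g.1 := matrixL1Norm_mul_le _ _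
      _ ≤ B * (2 * B ^ w.length) := Nat.mul_le_mul hh hg
      _ = 2 * B ^ (γ :: w).length := by rw [List.length_cons, pow_succ]; ring

lemma two_mul_pow_add_two_lt {B n : ℕ} (hB : 1 ≤ B) (hn : 1 ≤ n) :
    2 * B ^ n + 2 < 2 ^ ((B + 2) * n) :=
  calc 2 * B ^ n + 2 ≤ 4 * B ^ n := by linarith [Nat.one_le_pow n B hB]
    _ < 4 * (2 ^ B) ^ n := by gcongr; exact B.lt_two_pow_self
    _ ≤ 4 ^ n * (2 ^ B) ^ n := by gcongr; exact Nat.le_self_pow (by omega) 4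
    _ = 2 ^ ((B + 2) * n) := by rw [← mul_pow, pow_mul]; ring

theorem stmt11_general (X : Set ↥(MonoidHom.ker redPSL)) (hXfin : X.Finite) :
    ∃ M : ℕ, 1 ≤ M ∧ ∀ n : ℕ, 1 ≤ n →
      FGrowth nilpotentClass X n ≤ ((M * 2 ^ (M * n) : ℕ) : ℕ∞) := by
  obtain ⟨B, hB1, hB⟩ := exists_lift_matrixL1Norm_le ((hXfin.union hXfin.inv).image Subtype.val)
  refine ⟨8 * (B + 2), by omega, fun n hn => iSup_le fun γ => iSup₂_le fun hγ hγn => ?_⟩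
  obtain ⟨w, hwn, hwX, rfl⟩ := hγn
  obtain ⟨g, hgw, hg⟩ := exists_lift_prod_matrixL1Norm_le hB (w.map Subtype.val) (by
    simpa using fun x hx hxw => ⟨hx, hwX ⟨x, hx⟩ hxw⟩)
  set k := (B + 2) * n
  have hk : 1 ≤ k := Nat.one_le_iff_ne_zero.mpr (by positivity)
  rw [← Subgroup.val_list_prod] at hgw
  have hdetect : kerRedPSLToMod k w.prod ≠ 1 := by
    refine fun h => PSL2.map_mk_ne_one (hgw.trans_ne (by exact_mod_cast hγ)) ?_ (by
      simpa [kerRedPSLToMod, hgw] using h)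
    exact (Nat.add_le_add_right (hg.trans (by rw [List.length_map]; gcongr)) 2).trans_lt
      (two_mul_pow_add_two_lt hB1 hn)
  calc DQuot nilpotentClass w.prod
      ≤ Nat.card (PSL2 (GaussMod (2 ^ k))) :=
        DQuot_le_card_of_map_ne_one _ (isPGroup_range_kerRedPSLToMod hk).isNilpotent hdetect
    _ ≤ ((2 ^ k) ^ 2) ^ 4 := by
        exact_mod_cast PSL2.card_le.trans (Nat.pow_le_pow_left (GaussMod.card_le _) 4)
    _ ≤ ((8 * (B + 2) * 2 ^ (8 * (B + 2) * n) : ℕ) : ℕ∞) := by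
        rw [← pow_mul, ← pow_mul, show k * (2 * 4) = 8 * (B + 2) * n by ring]
        exact_mod_cast Nat.le_mul_of_pos_left _ (by omega)

theorem stmt11 (X : Set ↥(MonoidHom.ker redPSL)) (hXfin : X.Finite)
    (hXgen : Subgroup.closure X = ⊤) :
    ∃ M : ℕ, 1 ≤ M ∧ ∀ n : ℕ, 1 ≤ n →
      FGrowth nilpotentClass X n ≤ ((M * 2 ^ (M * n) : ℕ) : ℕ∞) :=
  stmt11_general X hXfin
end
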